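/- arXiv:2104.08299 — 8 statements merged into one kernel-verified Lean document; each statement's English description precedes it below -/
import Mathlib

section
/- For every integer p ≥ 3, setting β_sh = sqrt((p-1)^(p-1) / (p * (p-2)^(p-2))), the function f(t) = β_sh^2 * t^p + log(1-t) + t satisfies f(t) ≤ 0 for all t ∈ [0,1). -/
/-!
With `f(t) = b t^p + log(1-t) + t` we have `f(0) = 0` and
`f'(t) = t/(1-t) · (p b t^(p-2) (1-t) - 1)`. The maximum of `t^(p-2) (1-t)` on `[0,1]` is
`(p-2)^(p-2) / (p-1)^(p-1)`, attained at `t = (p-2)/(p-1)`, so `f' ≤ 0` on `[0,1)` exactly when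
`p b (p-2)^(p-2) ≤ (p-1)^(p-1)`; `β_sh²` is the largest such `b`, and `f` is nonincreasing.
-/

open Real Set

section LinearOrderedField

variable {K : Type*} [Field K] [LinearOrder K] [IsStrictOrderedRing K]

theorem pow_mul_sub_le_pow (n : ℕ) {s : K} (hs : 0 ≤ s) : s ^ n * (n + 1 - s) ≤ (n : K) ^ n := by
  rcases Nat.eq_zero_or_pos n with rfl | hn
  · simpa using hs
  rcases hs.eq_or_lt with rfl | hs
  · simp [hn.ne']
  have hn' : (0 : K) < n := by exact_mod_cast hn
  -- Bernoulli's inequality for `(n / s) ^ (n + 1)`, multiplied out by `s ^ (n + 1)`.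
  have bernoulli := one_add_mul_sub_le_pow (a := n / s) (by linarith [div_pos hn' hs]) (n + 1)
  rw [div_pow, le_div_iff₀ (by positivity)] at bernoulli
  have key : (1 + ((n + 1 : ℕ) : K) * (n / s - 1)) * s ^ (n + 1) = n * (s ^ n * (n + 1 - s)) := by
    field_simp
    push_cast
    ring
  rwa [key, pow_succ', mul_le_mul_iff_right₀ hn'] at bernoulli

theorem mul_pow_mul_one_sub_le_one (n : ℕ) {b x : K} (hb : (n + 2) * b * n ^ n ≤ (n + 1) ^ (n + 1))
    (hx₀ : 0 ≤ x) (hx₁ : x ≤ 1) : (n + 2) * b * (x ^ n * (1 - x)) ≤ 1 := by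
  have hmax : (n + 1) ^ (n + 1) * (x ^ n * (1 - x)) ≤ (n : K) ^ n := by
    calc (n + 1) ^ (n + 1) * (x ^ n * (1 - x)) = ((n + 1) * x) ^ n * (n + 1 - (n + 1) * x) := by
          rw [mul_pow, pow_succ]; ring
      _ ≤ n ^ n := pow_mul_sub_le_pow n (by positivity)
  have hpos : (0 : K) ≤ x ^ n * (1 - x) := mul_nonneg (pow_nonneg hx₀ n) (by linarith)
  rcases le_or_gt 0 b with hb₀ | hb₀
  · refine le_of_mul_le_mul_right ?_ (by positivity : (0 : K) < (n + 1) ^ (n + 1))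
    calc (n + 2) * b * (x ^ n * (1 - x)) * (n + 1) ^ (n + 1)
        = (n + 2) * b * ((n + 1) ^ (n + 1) * (x ^ n * (1 - x))) := by ring
      _ ≤ (n + 2) * b * n ^ n := by gcongr
      _ ≤ (n + 1) ^ (n + 1) := hb
      _ = 1 * (n + 1) ^ (n + 1) := (one_mul _).symm
  · have : (n + 2) * b * (x ^ n * (1 - x)) ≤ 0 :=
      mul_nonpos_of_nonpos_of_nonneg (mul_nonpos_of_nonneg_of_nonpos (by positivity) hb₀.le) hpos
    linarith

end LinearOrderedField

theorem hasDerivAt_mul_pow_add_log_one_sub_add (b : ℝ) (m : ℕ) {x : ℝ} (hx : x < 1) :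
    HasDerivAt (fun t => b * t ^ m + log (1 - t) + t) (b * m * x ^ (m - 1) - x / (1 - x)) x := by
  have hlog := ((hasDerivAt_id' x).const_sub 1).log (sub_ne_zero.2 hx.ne')
  refine (((hasDerivAt_pow m x).const_mul b).add hlog |>.add (hasDerivAt_id' x)).congr_deriv ?_
  field_simp [sub_ne_zero.2 hx.ne']
  ring

theorem mul_pow_add_log_one_sub_add_nonpos (n : ℕ) {b t : ℝ}
    (hb : (n + 2) * b * n ^ n ≤ (n + 1) ^ (n + 1)) (ht : t ∈ Ico (0 : ℝ) 1) :
    b * t ^ (n + 2) + log (1 - t) + t ≤ 0 := by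
  set f : ℝ → ℝ := fun t => b * t ^ (n + 2) + log (1 - t) + t
  set f' : ℝ → ℝ := fun x => b * (n + 2 : ℕ) * x ^ (n + 1) - x / (1 - x)
  have hf : ∀ x < 1, HasDerivAt f (f' x) x :=
    fun x hx => hasDerivAt_mul_pow_add_log_one_sub_add b (n + 2) hx
  have hf'_nonpos : ∀ x ∈ Ioo (0 : ℝ) 1, f' x ≤ 0 := by
    rintro x ⟨hx₀, hx₁⟩
    have h := mul_pow_mul_one_sub_le_one n hb hx₀.le hx₁.le
    have hx : 0 < 1 - x := by linarith
    rw [sub_nonpos, le_div_iff₀ hx]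
    calc b * (n + 2 : ℕ) * x ^ (n + 1) * (1 - x) = x * ((n + 2) * b * (x ^ n * (1 - x))) := by
          push_cast; ring
      _ ≤ x * 1 := mul_le_mul_of_nonneg_left h hx₀.le
      _ = x := mul_one x
  have hanti : AntitoneOn f (Ico 0 1) := by
    refine antitoneOn_of_hasDerivWithinAt_nonpos (f' := f') (convex_Ico 0 1)
      (fun x hx => (hf x hx.2).continuousAt.continuousWithinAt) ?_ ?_ <;> rw [interior_Ico]
    · exact fun x hx => (hf x hx.2).hasDerivWithinAt
    · exact hf'_nonpos
  simpa [f] using hanti ⟨le_rfl, zero_lt_one⟩ ht ht.1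

/-- Talagrand's replica symmetry test at the shattering inverse temperature:
for `p ≥ 3` and `β_sh = sqrt((p-1)^(p-1) / (p (p-2)^(p-2)))`, the function
`f(t) = β_sh² t^p + log(1-t) + t` is nonpositive on `[0,1)`. -/
theorem stmt_0 (p : ℕ) (hp : 3 ≤ p)
    (βsh : ℝ)
    (hβsh : βsh = Real.sqrt (((p : ℝ) - 1) ^ (p - 1) / ((p : ℝ) * ((p : ℝ) - 2) ^ (p - 2))))
    (t : ℝ) (ht : t ∈ Set.Ico (0 : ℝ) 1) :
    βsh ^ 2 * t ^ p + Real.log (1 - t) + t ≤ 0 := by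
  obtain ⟨n, rfl⟩ : ∃ n, p = n + 2 := ⟨p - 2, by omega⟩
  have hn : (n : ℝ) ≠ 0 := by exact_mod_cast (by omega : n ≠ 0)
  have hβsh_sq : βsh ^ 2 = (n + 1) ^ (n + 1) / ((n + 2) * n ^ n) := by
    have harg : (((n + 2 : ℕ) : ℝ) - 1) ^ (n + 2 - 1)
        / ((n + 2 : ℕ) * (((n + 2 : ℕ) : ℝ) - 2) ^ (n + 2 - 2))
        = (n + 1) ^ (n + 1) / ((n + 2) * n ^ n) := by
      push_cast
      ring_nf
    rw [hβsh, harg, sq_sqrt (by positivity)]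
  refine mul_pow_add_log_one_sub_add_nonpos n (le_of_eq ?_) ht
  rw [hβsh_sq]
  field_simp
end

section
/- Let p ≥ 3 be an integer, let q ∈ (0,1) satisfy q^2 ≥ (p-2)/p, and let β > 0 satisfy β * sqrt(p(p-1)) * (1-q^2) * q^(p-2) ≤ 1. Define ξ_q(t) = ((1-q^2)t + q^2)^p - q^(2p) - p(1-q^2) t q^(2p-2). Then β^2 ξ_q(t) + log(1-t) + t ≤ 0 for all t ∈ [0,1). -/
/-!
Write `a = q²` and `θ = 1 - q²`. By the binomial theorem
`ξ_q(t) = ∑_{k=2}^p C(p,k) θ^k a^(p-k) t^k`. The latitude condition `(p-2) θ ≤ 2a` makes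
`k C(p,k) θ^k a^(p-k)` nonincreasing in `k ≥ 2`, so it is at most its value `p(p-1) θ² a^(p-2)`
at `k = 2`, which the fixed-point condition bounds by `1/β²`. Hence
`β² ξ_q(t) ≤ ∑_{k≥2} t^k / k = -log(1-t) - t`.
-/

open Finset

lemma sum_Ico_two_pow_div_le_neg_log_sub {t : ℝ} (ht0 : 0 ≤ t) (ht1 : t < 1) (n : ℕ) :
    ∑ k ∈ Ico 2 n, t ^ k / k ≤ -Real.log (1 - t) - t := by
  have hs := (hasSum_nat_add_iff' 1).mpr
    (Real.hasSum_pow_div_log_of_abs_lt_one (abs_lt.2 ⟨by linarith, ht1⟩))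
  rw [sum_Ico_eq_sum_range]
  refine le_of_eq_of_le ?_
    ((sum_le_hasSum (range (n - 2)) (fun i _ => by positivity) hs).trans_eq ?_)
  · exact sum_congr rfl fun i _ => by push_cast; ring_nf
  · simp

lemma add_pow_sub_sub_eq_sum_Ico_two {R : Type*} [CommRing R] (x y : R) {p : ℕ} (hp : 1 ≤ p) :
    (x + y) ^ p - y ^ p - p * x * y ^ (p - 1) =
      ∑ k ∈ Ico 2 (p + 1), x ^ k * y ^ (p - k) * p.choose k := by
  rw [add_pow, range_eq_Ico, sum_eq_sum_Ico_succ_bot (by omega),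
    sum_eq_sum_Ico_succ_bot (by omega)]
  simp only [pow_zero, one_mul, Nat.sub_zero, Nat.choose_zero_right, Nat.cast_one, mul_one,
    zero_add, pow_one, Nat.choose_one_right]
  ring

lemma succ_mul_choose_succ_mul_pow_le {a θ : ℝ} (ha : 0 ≤ a) (hθ : 0 ≤ θ) {p n : ℕ} (hn : n < p)
    (hpn : ((p : ℝ) - n) * θ ≤ n * a) :
    ((n + 1 : ℕ) : ℝ) * p.choose (n + 1) * θ ^ (n + 1) * a ^ (p - (n + 1)) ≤
      n * p.choose n * θ ^ n * a ^ (p - n) := by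
  have hchoose : ((n + 1 : ℕ) : ℝ) * p.choose (n + 1) = p.choose n * ((p : ℝ) - n) := by
    have h := congrArg (Nat.cast (R := ℝ)) (Nat.choose_succ_right_eq p n)
    push_cast [Nat.cast_sub hn.le] at h ⊢
    linarith
  rw [hchoose, show p - n = p - (n + 1) + 1 by omega]
  calc (p.choose n : ℝ) * (p - n) * θ ^ (n + 1) * a ^ (p - (n + 1))
      = p.choose n * θ ^ n * a ^ (p - (n + 1)) * ((p - n) * θ) := by ring
    _ ≤ p.choose n * θ ^ n * a ^ (p - (n + 1)) * (n * a) := by gcongr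
    _ = n * p.choose n * θ ^ n * a ^ (p - (n + 1) + 1) := by ring

lemma mul_choose_mul_pow_le_of_two_le {a θ : ℝ} (ha : 0 ≤ a) (hθ : 0 ≤ θ) {p : ℕ}
    (hpa : ((p : ℝ) - 2) * θ ≤ 2 * a) {k : ℕ} (hk : 2 ≤ k) (hkp : k ≤ p) :
    k * p.choose k * θ ^ k * a ^ (p - k) ≤ p * (p - 1) * θ ^ 2 * a ^ (p - 2) := by
  induction k, hk using Nat.le_induction with
  | base => rw [Nat.cast_choose_two]; ring_nf; rfl
  | succ n hn ih =>
    refine (succ_mul_choose_succ_mul_pow_le ha hθ hkp ?_).trans (ih (by omega))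
    have hn2 : (2 : ℝ) ≤ n := by exact_mod_cast hn
    nlinarith

/-- Talagrand's replica symmetry test for the co-dimension 1 model `ξ_q` at latitude `q`:
if `q² ≥ (p-2)/p` and `β sqrt(p(p-1)) (1-q²) q^(p-2) ≤ 1`, then
`β² ξ_q(t) + log(1-t) + t ≤ 0` on `[0,1)`. -/
theorem stmt_3 (p : ℕ) (hp : 3 ≤ p) (q : ℝ) (hq : q ∈ Set.Ioo (0 : ℝ) 1)
    (hq2 : ((p : ℝ) - 2) / p ≤ q ^ 2) (β : ℝ) (hβ : 0 < β)
    (hfp : β * Real.sqrt ((p : ℝ) * ((p : ℝ) - 1)) * (1 - q ^ 2) * q ^ (p - 2) ≤ 1)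
    (t : ℝ) (ht : t ∈ Set.Ico (0 : ℝ) 1) :
    β ^ 2 * (((1 - q ^ 2) * t + q ^ 2) ^ p - q ^ (2 * p) -
        (p : ℝ) * (1 - q ^ 2) * t * q ^ (2 * p - 2)) +
      Real.log (1 - t) + t ≤ 0 := by
  obtain ⟨hq0, hq1⟩ := hq
  obtain ⟨ht0, ht1⟩ := ht
  have hpR : (3 : ℝ) ≤ p := by exact_mod_cast hp
  have hθ : 0 ≤ 1 - q ^ 2 := by nlinarith
  have hlat : ((p : ℝ) - 2) * (1 - q ^ 2) ≤ 2 * q ^ 2 := by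
    rw [div_le_iff₀ (by positivity)] at hq2
    linarith
  have hfp_sq : β ^ 2 * (p * (p - 1) * (1 - q ^ 2) ^ 2 * (q ^ 2) ^ (p - 2)) ≤ 1 := by
    have h := pow_le_one₀ (n := 2) (by positivity) hfp
    rw [mul_pow, mul_pow, mul_pow, Real.sq_sqrt (by nlinarith), ← pow_mul, mul_comm (p - 2),
      pow_mul] at h
    linarith
  have hterm : ∀ k ∈ Ico 2 (p + 1),
      β ^ 2 * (((1 - q ^ 2) * t) ^ k * (q ^ 2) ^ (p - k) * p.choose k) ≤ t ^ k / k := by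
    intro k hk
    obtain ⟨hk2, hkp⟩ := mem_Ico.mp hk
    have hk0 : (0 : ℝ) < k := by exact_mod_cast (by omega : 0 < k)
    rw [le_div_iff₀ hk0, mul_pow]
    have hc := mul_choose_mul_pow_le_of_two_le (sq_nonneg q) hθ hlat hk2 (by omega)
    have hck : β ^ 2 * (k * p.choose k * (1 - q ^ 2) ^ k * (q ^ 2) ^ (p - k)) ≤ 1 :=
      (mul_le_mul_of_nonneg_left hc (sq_nonneg β)).trans hfp_sq
    nlinarith [pow_nonneg ht0 k]
  rw [pow_mul, show 2 * p - 2 = 2 * (p - 1) by omega, pow_mul, mul_assoc _ (1 - q ^ 2) t,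
    add_pow_sub_sub_eq_sum_Ico_two _ _ (by omega), mul_sum]
  linarith [sum_le_sum hterm, sum_Ico_two_pow_div_le_neg_log_sub ht0 ht1 (p + 1)]
end

section
/- Let p ≥ 3 be an integer and let q ∈ (0,1) satisfy q^2 ≥ (p-2)/p. Then for every t ∈ [0,1], ((1-q^2) t + q^2)^(p-2) * (1-t)^2 ≤ q^(2(p-2)). -/
/-!
Put `a = q²` and `n = p - 2`, so that the hypothesis reads `n (1 - a) ≤ 2a`. Then the base satisfies
`(1 - a) t + a ≤ a (1 + 2t/n)`, and `(1 + 2t/n)ⁿ ≤ e^{2t}` while `(1 - t)² ≤ e^{-2t}`,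
so the left-hand side is at most `aⁿ`.
-/

open Real

lemma one_add_two_mul_div_pow_mul_one_sub_sq_le_one (n : ℕ) {t : ℝ} (ht₀ : 0 ≤ t) (ht₁ : t ≤ 1) :
    (1 + 2 * t / n) ^ n * (1 - t) ^ 2 ≤ 1 := by
  have h_pow : (1 + 2 * t / n) ^ n ≤ exp (2 * t) := by
    have hn : -(2 * t) ≤ n := by linarith [n.cast_nonneg (α := ℝ)]
    convert one_sub_div_pow_le_exp_neg hn using 2 <;> ring
  have h_sq : (1 - t) ^ 2 ≤ exp (-t) ^ 2 :=
    pow_le_pow_left₀ (by linarith) (one_sub_le_exp_neg t) 2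
  calc (1 + 2 * t / n) ^ n * (1 - t) ^ 2 ≤ exp (2 * t) * exp (-t) ^ 2 := by
        gcongr
    _ = 1 := by rw [sq, ← exp_add, ← exp_add, ← exp_zero]; ring_nf

lemma one_sub_mul_add_pow_mul_one_sub_sq_le_pow (n : ℕ) {a t : ℝ} (ha : 0 ≤ a)
    (hna : n * (1 - a) ≤ 2 * a) (ht₀ : 0 ≤ t) (ht₁ : t ≤ 1) :
    ((1 - a) * t + a) ^ n * (1 - t) ^ 2 ≤ a ^ n := by
  rcases Nat.eq_zero_or_pos n with rfl | hn
  · simp only [pow_zero, one_mul]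
    nlinarith
  have h_base : (1 - a) * t + a ≤ a * (1 + 2 * t / n) := by
    have hn' : (0 : ℝ) < n := by exact_mod_cast hn
    rw [mul_add, mul_one, add_comm, add_le_add_iff_left, mul_div_assoc', le_div_iff₀ hn']
    nlinarith
  calc ((1 - a) * t + a) ^ n * (1 - t) ^ 2 ≤ (a * (1 + 2 * t / n)) ^ n * (1 - t) ^ 2 := by
        gcongr
        nlinarith
    _ = a ^ n * ((1 + 2 * t / n) ^ n * (1 - t) ^ 2) := by rw [mul_pow, mul_assoc]
    _ ≤ a ^ n := by
        apply mul_le_of_le_one_right (by positivity)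
        exact one_add_two_mul_div_pow_mul_one_sub_sq_le_one n ht₀ ht₁

theorem stmt_4_general (p : ℕ) (hp : 3 ≤ p) (q : ℝ)
    (hq2 : ((p : ℝ) - 2) / p ≤ q ^ 2) (t : ℝ) (ht : t ∈ Set.Icc (0 : ℝ) 1) :
    ((1 - q ^ 2) * t + q ^ 2) ^ (p - 2) * (1 - t) ^ 2 ≤ q ^ (2 * (p - 2)) := by
  have hp₀ : (0 : ℝ) < p := by positivity
  have hq : ((p - 2 : ℕ) : ℝ) * (1 - q ^ 2) ≤ 2 * q ^ 2 := by
    rw [div_le_iff₀ hp₀] at hq2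
    rw [Nat.cast_sub (by omega), Nat.cast_ofNat]
    linarith
  rw [pow_mul]
  exact one_sub_mul_add_pow_mul_one_sub_sq_le_pow (p - 2) (sq_nonneg q) hq ht.1 ht.2

/-- For `p ≥ 3`, `q ∈ (0,1)` with `q² ≥ (p-2)/p`, and `t ∈ [0,1]`:
`((1-q²)t + q²)^(p-2) (1-t)² ≤ q^(2(p-2))`. -/
theorem stmt_4 (p : ℕ) (hp : 3 ≤ p) (q : ℝ) (hq : q ∈ Set.Ioo (0 : ℝ) 1)
    (hq2 : ((p : ℝ) - 2) / p ≤ q ^ 2) (t : ℝ) (ht : t ∈ Set.Icc (0 : ℝ) 1) :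
    ((1 - q ^ 2) * t + q ^ 2) ^ (p - 2) * (1 - t) ^ 2 ≤ q ^ (2 * (p - 2)) :=
  stmt_4_general p hp q hq2 t ht
end

section
/- Let p ≥ 3 be an integer, E_∞ = -2 sqrt((p-1)/p), and define Θ(E) = (1/2) log(p-1) - ((p-2)/(4(p-1))) E^2 - (2/E_∞^2) ∫_E^{E_∞} sqrt(z^2 - E_∞^2) dz for E ≤ E_∞. Then Θ(E_∞) = (1/2) log(p-1) - (p-2)/p > 0, and there exists a unique E_0 ∈ (-∞, E_∞) with Θ(E_0) = 0; moreover Θ(E) < 0 for E < E_0 and Θ(E) > 0 for E_0 < E ≤ E_∞. -/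
/-! The value `Θ(E∞) = ½ log(p-1) - (p-2)/p` is positive because `log (1 + a) > 2a/(a+2)`, the
first term of the series of `log (1 + a)` in powers of `a/(a+2)`. Since `E∞ < 0`, both `-aE²` and
`-k ∫_E^{E∞}` increase on `(-∞, E∞]`, so `Θ` is continuous and strictly increasing there; the
integral term is nonpositive, so `Θ ≤ c - aE² → -∞`, and the intermediate value theorem gives the
unique zero `E₀`. -/

open Real Set Filter intervalIntegral

theorem Real.two_mul_div_add_two_lt_log_one_add {a : ℝ} (ha : 0 < a) :
    2 * a / (a + 2) < log (1 + a) := by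
  have hle := sum_le_hasSum (Finset.range 2) (fun _ _ => by positivity) (hasSum_log_one_add ha.le)
  norm_num [Finset.sum_range_succ] at hle
  have hcube : 0 < (a / (a + 2)) ^ 3 := by positivity
  rw [mul_div_assoc]
  linarith

theorem sub_two_div_lt_half_log_sub_one {p : ℝ} (hp : 2 < p) :
    (p - 2) / p < 1 / 2 * log (p - 1) := by
  have h := two_mul_div_add_two_lt_log_one_add (a := p - 2) (by linarith)
  rw [show p - 2 + 2 = p by ring, show 1 + (p - 2) = p - 1 by ring, mul_div_assoc] at h
  linarith

section QuadraticMinusIntegral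

variable {f : ℝ → ℝ} {a k : ℝ}

theorem strictMonoOn_sub_mul_sq_sub_mul_integral (c : ℝ) {b : ℝ} (ha : 0 < a) (hk : 0 ≤ k)
    (hb : b ≤ 0) (hf : Continuous f) (hf0 : ∀ z, 0 ≤ f z) :
    StrictMonoOn (fun E => c - a * E ^ 2 - k * ∫ z in E..b, f z) (Iic b) := by
  intro E₁ _ E₂ h₂ h₁₂
  have hsplit : (∫ z in E₁..E₂, f z) + ∫ z in E₂..b, f z = ∫ z in E₁..b, f z :=
    integral_add_adjacent_intervals (hf.intervalIntegrable _ _) (hf.intervalIntegrable _ _)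
  have hI : 0 ≤ ∫ z in E₁..E₂, f z := integral_nonneg h₁₂.le fun z _ => hf0 z
  have hsq : E₂ ^ 2 < E₁ ^ 2 := by
    simp only [mem_Iic] at h₂
    nlinarith
  simp only [← hsplit]
  nlinarith [mul_nonneg hk hI]

theorem continuous_sub_mul_sq_sub_mul_integral (c a k b : ℝ) (hf : Continuous f) :
    Continuous (fun E => c - a * E ^ 2 - k * ∫ z in E..b, f z) := by
  have := continuous_primitive (μ := MeasureTheory.volume) (fun u v => hf.intervalIntegrable u v) b
  simp_rw [integral_symm b]
  fun_prop

theorem exists_le_sub_mul_sq_sub_mul_integral_neg (c b : ℝ) (ha : 0 < a) (hk : 0 ≤ k)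
    (hf0 : ∀ z, 0 ≤ f z) : ∃ E ≤ b, c - a * E ^ 2 - k * ∫ z in E..b, f z < 0 := by
  have hsq : Tendsto (fun E : ℝ => E ^ 2) atBot atTop := by
    simpa only [sq, id] using tendsto_id.atBot_mul_atBot₀ tendsto_id
  have hquad : Tendsto (fun E => c - a * E ^ 2) atBot atBot :=
    tendsto_atBot_add_const_left _ c (tendsto_neg_atTop_atBot.comp (hsq.const_mul_atTop ha))
  obtain ⟨E, hEb, hE⟩ := ((eventually_le_atBot b).and (hquad.eventually_lt_atBot 0)).exists
  have hI : 0 ≤ ∫ z in E..b, f z := integral_nonneg hEb fun z _ => hf0 z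
  exact ⟨E, hEb, by nlinarith [mul_nonneg hk hI]⟩

end QuadraticMinusIntegral

theorem existsUnique_lt_eq_zero_of_strictMonoOn_Iic {g : ℝ → ℝ} {b x : ℝ}
    (hmono : StrictMonoOn g (Iic b)) (hcont : ContinuousOn g (Iic b)) (hxb : x ≤ b)
    (hx : g x < 0) (hb : 0 < g b) : ∃! z, z < b ∧ g z = 0 := by
  obtain ⟨z, hz, hgz⟩ := intermediate_value_Icc hxb (hcont.mono Icc_subset_Iic_self) ⟨hx.le, hb.le⟩
  have hzb : z < b := hz.2.lt_of_ne (by rintro rfl; exact hb.ne' hgz)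
  refine ⟨z, ⟨hzb, hgz⟩, fun y ⟨hyb, hgy⟩ => ?_⟩
  exact hmono.injOn (mem_Iic.2 hyb.le) (mem_Iic.2 hzb.le) (hgy.trans hgz.symm)

/-- For the asymptotic complexity `Θ`, one has `Θ(E∞) = ½ log(p-1) - (p-2)/p > 0`, there is a
unique `E₀ < E∞` with `Θ(E₀) = 0`, and `Θ < 0` below `E₀` while `Θ > 0` on `(E₀, E∞]`. -/
theorem stmt_9 (p : ℕ) (hp : 3 ≤ p)
    (Einf : ℝ) (hEinf : Einf = -2 * Real.sqrt (((p : ℝ) - 1) / p))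
    (Θ : ℝ → ℝ)
    (hΘ : Θ = fun E : ℝ =>
      (1 / 2) * Real.log ((p : ℝ) - 1) - (((p : ℝ) - 2) / (4 * ((p : ℝ) - 1))) * E ^ 2 -
        (2 / Einf ^ 2) * ∫ z in E..Einf, Real.sqrt (z ^ 2 - Einf ^ 2)) :
    Θ Einf = (1 / 2) * Real.log ((p : ℝ) - 1) - ((p : ℝ) - 2) / p ∧
    0 < Θ Einf ∧
    (∃! E₀ : ℝ, E₀ < Einf ∧ Θ E₀ = 0) ∧
    (∀ E₀ : ℝ, E₀ < Einf → Θ E₀ = 0 →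
      (∀ E : ℝ, E < E₀ → Θ E < 0) ∧ (∀ E : ℝ, E₀ < E → E ≤ Einf → 0 < Θ E)) := by
  have hp3 : (3 : ℝ) ≤ p := by exact_mod_cast hp
  have hq : 0 < ((p : ℝ) - 1) / p := div_pos (by linarith) (by linarith)
  have hEinf_neg : Einf < 0 := by rw [hEinf]; nlinarith [Real.sqrt_pos.2 hq]
  have hEinf_sq : Einf ^ 2 = 4 * (((p : ℝ) - 1) / p) := by
    rw [hEinf, mul_pow, Real.sq_sqrt hq.le]; ring
  have ha : 0 < ((p : ℝ) - 2) / (4 * ((p : ℝ) - 1)) := div_pos (by linarith) (by linarith)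
  have hk : 0 ≤ 2 / Einf ^ 2 := by positivity
  have hf : Continuous fun z : ℝ => Real.sqrt (z ^ 2 - Einf ^ 2) := by fun_prop
  have hval : Θ Einf = (1 / 2) * Real.log ((p : ℝ) - 1) - ((p : ℝ) - 2) / p := by
    simp only [hΘ, integral_same, mul_zero, sub_zero, hEinf_sq]
    field_simp [show (p : ℝ) - 1 ≠ 0 by linarith, show (p : ℝ) ≠ 0 by linarith]
  have hpos : 0 < Θ Einf := hval ▸ sub_pos.2 (sub_two_div_lt_half_log_sub_one (by linarith))
  have hmono : StrictMonoOn Θ (Iic Einf) :=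
    hΘ ▸ strictMonoOn_sub_mul_sq_sub_mul_integral _ ha hk hEinf_neg.le hf fun _ => sqrt_nonneg _
  have hcont : Continuous Θ := hΘ ▸ continuous_sub_mul_sq_sub_mul_integral _ _ _ _ hf
  obtain ⟨x, hxb, hx⟩ : ∃ x ≤ Einf, Θ x < 0 :=
    hΘ ▸ exists_le_sub_mul_sq_sub_mul_integral_neg _ _ ha hk fun _ => sqrt_nonneg _
  refine ⟨hval, hpos,
    existsUnique_lt_eq_zero_of_strictMonoOn_Iic hmono hcont.continuousOn hxb hx hpos,
    fun E₀ hE₀ hΘE₀ => ⟨fun E hE => ?_, fun E hE hEb => ?_⟩⟩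
  · exact hΘE₀ ▸ hmono (mem_Iic.2 (hE.trans hE₀).le) (mem_Iic.2 hE₀.le) hE
  · exact hΘE₀ ▸ hmono (mem_Iic.2 hE₀.le) (mem_Iic.2 hEb) hE
end

section
/- Let p ≥ 3 be an integer, E_∞ = -2 sqrt((p-1)/p), β > 0, E ≤ E_∞, and define F_RS(E,q,β) = -β q^p E + (1/2) log(1-q^2) + (β^2/2)(1 - q^(2p) - p q^(2p-2)(1-q^2)) for q ∈ [0,1). Then for every q ∈ [0,1), ∂_q F_RS(E,q,β) = -(β^2 p (p-1) q / (1-q^2)) * ((1-q^2) q^(p-2) - A_-) * ((1-q^2) q^(p-2) - A_+), where A_± = (-E ± sqrt(E^2 - E_∞^2)) / (2 β (p-1)). -/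
/-!
Differentiating term by term, `∂_q F_RS = -(q/(1-q²)) Q((1-q²)q^(p-2))` with
`Q(x) = β²p(p-1)x² + βpEx + 1`. Since `E_∞² = 4(p-1)/p`, the discriminant of `Q` is
`β²p²(E² - E_∞²)`, nonnegative for `E ≤ E_∞ ≤ 0`, and `A_±` are exactly the roots of `Q`.
-/

theorem quadratic_eq_mul_sub_mul_sub {K : Type*} [Field K] [NeZero (2 : K)] {a b c s : K}
    (ha : a ≠ 0) (h : discrim a b c = s * s) (x : K) :
    a * (x * x) + b * x + c = a * (x - (-b - s) / (2 * a)) * (x - (-b + s) / (2 * a)) := by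
  rw [discrim] at h
  field_simp
  linear_combination (-1 : K) * h

noncomputable def freeEnergyRS (p : ℕ) (β E q : ℝ) : ℝ :=
  -β * q ^ p * E + (1 / 2) * Real.log (1 - q ^ 2) +
    β ^ 2 / 2 * (1 - q ^ (2 * p) - (p : ℝ) * q ^ (2 * p - 2) * (1 - q ^ 2))

theorem hasDerivAt_freeEnergyRS {p : ℕ} (hp : 2 ≤ p) (β E : ℝ) {q : ℝ} (hq : 1 - q ^ 2 ≠ 0) :
    HasDerivAt (freeEnergyRS p β E)
      (-(q / (1 - q ^ 2)) * (β ^ 2 * p * (p - 1) * ((1 - q ^ 2) * q ^ (p - 2)) ^ 2 +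
        β * p * E * ((1 - q ^ 2) * q ^ (p - 2)) + 1)) q := by
  obtain ⟨k, rfl⟩ : ∃ k, p = k + 2 := ⟨p - 2, by omega⟩
  have hsq := (hasDerivAt_pow 2 q).const_sub 1
  have h : HasDerivAt (freeEnergyRS (k + 2) β E) _ q :=
    ((((hasDerivAt_pow (k + 2) q).const_mul (-β)).mul_const E).add
      ((hsq.log hq).const_mul (1 / 2))).add
    ((((hasDerivAt_pow (2 * (k + 2)) q).const_sub 1).sub
      (((hasDerivAt_pow (2 * (k + 2) - 2) q).const_mul ((k + 2 : ℕ) : ℝ)).mul hsq)).const_mul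
        (β ^ 2 / 2))
  convert h using 1
  simp only [show 2 * (k + 2) - 2 = 2 * k + 2 by omega, show 2 * (k + 2) - 1 = 2 * k + 3 by omega,
    show 2 * k + 2 - 1 = 2 * k + 1 by omega, Nat.add_sub_cancel]
  field_simp
  push_cast
  ring

theorem tap_quadratic_eq_mul_sub_mul_sub {p β E : ℝ} (hp : 1 < p) (hβ : β ≠ 0)
    (hE : 4 * ((p - 1) / p) ≤ E ^ 2) (x : ℝ) :
    β ^ 2 * p * (p - 1) * x ^ 2 + β * p * E * x + 1 =
      β ^ 2 * p * (p - 1) * (x - (-E - √(E ^ 2 - 4 * ((p - 1) / p))) / (2 * β * (p - 1))) *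
        (x - (-E + √(E ^ 2 - 4 * ((p - 1) / p))) / (2 * β * (p - 1))) := by
  have hp0 : p ≠ 0 := by positivity
  have hp1 : p - 1 ≠ 0 := sub_ne_zero.mpr hp.ne'
  set s := √(E ^ 2 - 4 * ((p - 1) / p))
  have hs : s * s = E ^ 2 - 4 * ((p - 1) / p) := Real.mul_self_sqrt (sub_nonneg.mpr hE)
  have hdiscrim : discrim (β ^ 2 * p * (p - 1)) (β * p * E) 1 = (β * p * s) * (β * p * s) := by
    rw [discrim, mul_mul_mul_comm, hs]
    field_simp
  rw [sq x, quadratic_eq_mul_sub_mul_sub (by positivity) hdiscrim]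
  field_simp

/-- Factorized form of the `q`-derivative of the replica symmetric TAP free energy
`F_RS(E,q,β) = -β q^p E + ½ log(1-q²) + (β²/2)(1 - q^(2p) - p q^(2p-2)(1-q²))`:
`∂_q F_RS = -(β² p (p-1) q/(1-q²)) ((1-q²)q^(p-2) - A₋)((1-q²)q^(p-2) - A₊)` with
`A_± = (-E ± sqrt(E² - E∞²))/(2β(p-1))`. -/
theorem stmt_10 (p : ℕ) (hp : 3 ≤ p) (β : ℝ) (hβ : 0 < β)
    (Einf : ℝ) (hEinf : Einf = -2 * Real.sqrt (((p : ℝ) - 1) / p))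
    (E : ℝ) (hE : E ≤ Einf)
    (Aminus Aplus : ℝ)
    (hAm : Aminus = (-E - Real.sqrt (E ^ 2 - Einf ^ 2)) / (2 * β * ((p : ℝ) - 1)))
    (hAp : Aplus = (-E + Real.sqrt (E ^ 2 - Einf ^ 2)) / (2 * β * ((p : ℝ) - 1)))
    (q : ℝ) (hq : q ∈ Set.Ico (0 : ℝ) 1) :
    HasDerivAt (fun q : ℝ => -β * q ^ p * E + (1 / 2) * Real.log (1 - q ^ 2) +
        β ^ 2 / 2 * (1 - q ^ (2 * p) - (p : ℝ) * q ^ (2 * p - 2) * (1 - q ^ 2)))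
      (-(β ^ 2 * (p : ℝ) * ((p : ℝ) - 1) * q / (1 - q ^ 2)) *
        ((1 - q ^ 2) * q ^ (p - 2) - Aminus) * ((1 - q ^ 2) * q ^ (p - 2) - Aplus)) q := by
  have hp1 : (1 : ℝ) < p := by exact_mod_cast (by omega : 1 < p)
  have hq2 : 1 - q ^ 2 ≠ 0 := by nlinarith [hq.1, hq.2]
  have hEinf_sq : Einf ^ 2 = 4 * (((p : ℝ) - 1) / p) := by
    rw [hEinf, mul_pow, Real.sq_sqrt (by positivity)]
    norm_num
  have hEinf_nonpos : Einf ≤ 0 := by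
    rw [hEinf]
    nlinarith [Real.sqrt_nonneg (((p : ℝ) - 1) / p)]
  have hE_sq : 4 * (((p : ℝ) - 1) / p) ≤ E ^ 2 := by nlinarith
  rw [hAm, hAp, hEinf_sq]
  refine (hasDerivAt_freeEnergyRS (by omega : 2 ≤ p) β E hq2).congr_deriv ?_
  rw [tap_quadratic_eq_mul_sub_mul_sub hp1 hβ.ne' hE_sq]
  ring
end

section
/- Let p ≥ 3 be an integer, E_∞ = -2 sqrt((p-1)/p), β > 0, E ≤ E_∞, and suppose q ∈ (0,1) satisfies the fixed-point equation (1-q^2) q^(p-2) = (-E - sqrt(E^2 - E_∞^2)) / (2 β (p-1)). Then, with F_RS(E,q,β) = -β q^p E + (1/2) log(1-q^2) + (β^2/2)(1 - q^(2p) - p q^(2p-2)(1-q^2)), one has ∂_q^2 F_RS(E,q,β) = -(β p^2 q^(p-2) / (1-q^2)) * sqrt(E^2 - E_∞^2) * (q^2 - (p-2)/p). In particular, if E < E_∞ and q^2 > (p-2)/p, then ∂_q^2 F_RS(E,q,β) < 0. -/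
/-!
Differentiating twice expresses `∂²_q F_RS` through `q` and `y = (1 - q²) q^(p-2)`. The
fixed-point equation reads `2β(p-1) y = -E - √(E² - E∞²)`; squaring it and using
`E∞² = 4(p-1)/p` gives the TAP relation `β² p (p-1) y² + β p E y + 1 = 0`, which eliminates `E`
from the second derivative and makes it factor as claimed. For `E < E∞` the square root is
positive, so the sign is that of `(p-2)/p - q²`.
-/

open Real Filter Topology

noncomputable def tapFreeEnergy (p : ℕ) (β E q : ℝ) : ℝ :=
  -β * q ^ p * E + (1 / 2) * log (1 - q ^ 2) +
    β ^ 2 / 2 * (1 - q ^ (2 * p) - (p : ℝ) * q ^ (2 * p - 2) * (1 - q ^ 2))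

noncomputable def tapFreeEnergyDeriv (p : ℕ) (β E q : ℝ) : ℝ :=
  -β * p * E * q ^ (p - 1) - q / (1 - q ^ 2) -
    β ^ 2 * p * (p - 1) * q ^ (2 * p - 3) * (1 - q ^ 2)

theorem hasDerivAt_one_sub_sq (q : ℝ) : HasDerivAt (fun y : ℝ => 1 - y ^ 2) (-(2 * q)) q := by
  simpa using (hasDerivAt_pow 2 q).const_sub 1

section
variable {p : ℕ} {β E q : ℝ}

theorem hasDerivAt_tapFreeEnergy (hp : 2 ≤ p) (hq : 1 - q ^ 2 ≠ 0) :
    HasDerivAt (tapFreeEnergy p β E) (tapFreeEnergyDeriv p β E q) q := by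
  have hsq := hasDerivAt_one_sub_sq q
  have h := (((hasDerivAt_pow p q).const_mul (-β)).mul_const E).add
    ((hsq.log hq).const_mul (1 / 2)) |>.add
    ((((hasDerivAt_pow (2 * p) q).const_sub 1).sub
      (((hasDerivAt_pow (2 * p - 2) q).const_mul (p : ℝ)).mul hsq)).const_mul (β ^ 2 / 2))
  refine h.congr_deriv ?_
  obtain ⟨n, rfl⟩ : ∃ n, p = n + 2 := ⟨p - 2, by omega⟩
  simp only [tapFreeEnergyDeriv, show n + 2 - 1 = n + 1 by omega,
    show 2 * (n + 2) - 3 = 2 * n + 1 by omega, show 2 * (n + 2) - 2 = 2 * n + 2 by omega,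
    show 2 * (n + 2) - 1 = 2 * n + 3 by omega,
    show 2 * n + 2 - 1 = 2 * n + 1 by omega]
  push_cast
  field_simp
  ring

theorem hasDerivAt_tapFreeEnergyDeriv (hp : 2 ≤ p) (hq : 1 - q ^ 2 ≠ 0) :
    HasDerivAt (tapFreeEnergyDeriv p β E)
      (-β * p * (p - 1) * E * q ^ (p - 2) - (1 + q ^ 2) / (1 - q ^ 2) ^ 2 -
        β ^ 2 * p * (p - 1) * (q ^ (p - 2)) ^ 2 * ((2 * p - 3) * (1 - q ^ 2) - 2 * q ^ 2)) q := by
  have hsq := hasDerivAt_one_sub_sq q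
  have h := (((hasDerivAt_pow (p - 1) q).const_mul (-β * p * E)).sub
    ((hasDerivAt_id q).div hsq hq)).sub
    (((hasDerivAt_pow (2 * p - 3) q).const_mul (β ^ 2 * p * (p - 1))).mul hsq)
  refine h.congr_deriv ?_
  obtain ⟨n, rfl⟩ : ∃ n, p = n + 2 := ⟨p - 2, by omega⟩
  simp only [id, show n + 2 - 1 = n + 1 by omega, show 2 * (n + 2) - 3 = 2 * n + 1 by omega,
    show n + 2 - 2 = n by omega, show n + 1 - 1 = n by omega, show 2 * n + 1 - 1 = 2 * n by omega]
  push_cast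
  field_simp
  ring

theorem iteratedDeriv_two_tapFreeEnergy (hp : 2 ≤ p) (hq : 1 - q ^ 2 ≠ 0) :
    iteratedDeriv 2 (tapFreeEnergy p β E) q =
      -β * p * (p - 1) * E * q ^ (p - 2) - (1 + q ^ 2) / (1 - q ^ 2) ^ 2 -
        β ^ 2 * p * (p - 1) * (q ^ (p - 2)) ^ 2 * ((2 * p - 3) * (1 - q ^ 2) - 2 * q ^ 2) := by
  have hderiv : deriv (tapFreeEnergy p β E) =ᶠ[𝓝 q] tapFreeEnergyDeriv p β E := by
    filter_upwards [(continuous_const.sub (continuous_pow 2)).continuousAt.eventually_ne hq]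
      with y hy using (hasDerivAt_tapFreeEnergy hp hy).deriv
  rw [iteratedDeriv_succ, iteratedDeriv_one, hderiv.deriv_eq]
  exact (hasDerivAt_tapFreeEnergyDeriv hp hq).deriv

end

theorem tapHessian_eq_of_fixedPoint {p β E S q x : ℝ} (hp : p ≠ 0) (hp1 : p ≠ 1) (hβ : β ≠ 0)
    (hq : 1 - q ^ 2 ≠ 0) (hS : S ^ 2 = E ^ 2 - 4 * ((p - 1) / p))
    (hfp : (1 - q ^ 2) * x = (-E - S) / (2 * β * (p - 1))) :
    -β * p * (p - 1) * E * x - (1 + q ^ 2) / (1 - q ^ 2) ^ 2 -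
        β ^ 2 * p * (p - 1) * x ^ 2 * ((2 * p - 3) * (1 - q ^ 2) - 2 * q ^ 2) =
      -(β * p ^ 2 * x / (1 - q ^ 2)) * S * (q ^ 2 - (p - 2) / p) := by
  have hp1' : p - 1 ≠ 0 := sub_ne_zero.mpr hp1
  have hS_lin : S = -E - 2 * β * (p - 1) * ((1 - q ^ 2) * x) := by
    field_simp at hfp
    linarith
  have htap :
      β * p * E * ((1 - q ^ 2) * x) + β ^ 2 * p * (p - 1) * ((1 - q ^ 2) * x) ^ 2 = -1 := by
    rw [hS_lin] at hS
    field_simp at hS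
    refine mul_left_cancel₀ (mul_ne_zero four_ne_zero hp1') ?_
    linear_combination hS
  rw [hS_lin]
  field_simp
  linear_combination (-(1 + q ^ 2)) * htap

/-- Second `q`-derivative of the replica symmetric TAP free energy at a solution of the
fixed-point equation: `∂²_q F_RS(E,q,β) = -(β p² q^(p-2)/(1-q²)) sqrt(E²-E∞²) (q² - (p-2)/p)`;
in particular it is negative when `E < E∞` and `q² > (p-2)/p`. -/
theorem stmt_11 (p : ℕ) (hp : 3 ≤ p) (β : ℝ) (hβ : 0 < β)
    (Einf : ℝ) (hEinf : Einf = -2 * Real.sqrt (((p : ℝ) - 1) / p))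
    (E : ℝ) (hE : E ≤ Einf)
    (q : ℝ) (hq : q ∈ Set.Ioo (0 : ℝ) 1)
    (hfp : (1 - q ^ 2) * q ^ (p - 2) =
      (-E - Real.sqrt (E ^ 2 - Einf ^ 2)) / (2 * β * ((p : ℝ) - 1))) :
    iteratedDeriv 2 (fun q : ℝ => -β * q ^ p * E + (1 / 2) * Real.log (1 - q ^ 2) +
        β ^ 2 / 2 * (1 - q ^ (2 * p) - (p : ℝ) * q ^ (2 * p - 2) * (1 - q ^ 2))) q =
      -(β * (p : ℝ) ^ 2 * q ^ (p - 2) / (1 - q ^ 2)) * Real.sqrt (E ^ 2 - Einf ^ 2) *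
        (q ^ 2 - ((p : ℝ) - 2) / p) ∧
    (E < Einf → ((p : ℝ) - 2) / p < q ^ 2 →
      iteratedDeriv 2 (fun q : ℝ => -β * q ^ p * E + (1 / 2) * Real.log (1 - q ^ 2) +
        β ^ 2 / 2 * (1 - q ^ (2 * p) - (p : ℝ) * q ^ (2 * p - 2) * (1 - q ^ 2))) q < 0) := by
  obtain ⟨hq0, hq1⟩ := hq
  have hD : 0 < 1 - q ^ 2 := by nlinarith
  have hp3 : (3 : ℝ) ≤ p := by exact_mod_cast hp
  have hEinf_sq : Einf ^ 2 = 4 * (((p : ℝ) - 1) / p) := by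
    rw [hEinf, mul_pow, Real.sq_sqrt (div_nonneg (by linarith) (by linarith))]
    ring
  have hEinf_nonpos : Einf ≤ 0 := by
    rw [hEinf]
    linarith [Real.sqrt_nonneg (((p : ℝ) - 1) / p)]
  have hS_sq : Real.sqrt (E ^ 2 - Einf ^ 2) ^ 2 = E ^ 2 - 4 * (((p : ℝ) - 1) / p) := by
    rw [Real.sq_sqrt (by nlinarith), hEinf_sq]
  have hhess := iteratedDeriv_two_tapFreeEnergy (p := p) (β := β) (E := E) (by omega) hD.ne'
  rw [tapHessian_eq_of_fixedPoint (by positivity) (by linarith) hβ.ne' hD.ne' hS_sq hfp] at hhess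
  refine ⟨hhess, fun hE_lt hq_sq => hhess.trans_lt ?_⟩
  have hS_pos : 0 < Real.sqrt (E ^ 2 - Einf ^ 2) := Real.sqrt_pos.mpr (by nlinarith)
  have hcoef : 0 < β * (p : ℝ) ^ 2 * q ^ (p - 2) / (1 - q ^ 2) := by positivity
  rw [neg_mul, neg_mul, neg_lt_zero]
  exact mul_pos (mul_pos hcoef hS_pos) (sub_pos.mpr hq_sq)
end

section
/- Let p ≥ 3 be an integer, E_∞ = -2 sqrt((p-1)/p), and β_sh = sqrt((p-1)^(p-1)/(p (p-2)^(p-2))). Then for every β ≥ β_sh and every q with sqrt((p-2)/(p-1)) < q ≤ 1, one has -β q^p - E_∞ + p E_∞ / (2(p-1)) < 0. -/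
/-! The two sides balance exactly at the threshold: with `q_** = sqrt((p-2)/(p-1))`,
`β_sh q_**^p = (p-2)/sqrt(p(p-1)) = -E∞ + p E∞/(2(p-1))`. Since `β q^p` is nondecreasing in `β`
and strictly increasing in `q ≥ 0`, the expression is negative beyond `(β_sh, q_**)`. -/

lemma sqrt_shattering_mul_threshold_pow_eq (p : ℕ) (hp : 2 ≤ p) :
    Real.sqrt (((p : ℝ) - 1) ^ (p - 1) / ((p : ℝ) * ((p : ℝ) - 2) ^ (p - 2))) *
        Real.sqrt (((p : ℝ) - 2) / ((p : ℝ) - 1)) ^ p =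
      ((p : ℝ) - 2) / Real.sqrt ((p : ℝ) * ((p : ℝ) - 1)) := by
  obtain ⟨n, rfl⟩ : ∃ n, p = n + 2 := ⟨p - 2, by omega⟩
  simp only [Nat.add_sub_cancel, show n + 2 - 1 = n + 1 by omega]
  push_cast
  simp only [add_sub_cancel_right, show (n : ℝ) + 2 - 1 = n + 1 by ring]
  rw [← pow_left_inj₀ (by positivity) (by positivity) two_ne_zero, mul_pow, ← pow_mul,
    mul_comm (n + 2) 2, pow_mul, div_pow (n : ℝ), Real.sq_sqrt (by positivity),
    Real.sq_sqrt (by positivity), Real.sq_sqrt (by positivity), div_pow]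
  rcases Nat.eq_zero_or_pos n with rfl | hn
  · simp
  · have : (0 : ℝ) < n := by exact_mod_cast hn
    field_simp
    ring

lemma neg_add_mul_div_of_eq_neg_two_sqrt (p : ℕ) (hp : 2 ≤ p) (E : ℝ)
    (hE : E = -2 * Real.sqrt (((p : ℝ) - 1) / p)) :
    -E + (p : ℝ) * E / (2 * ((p : ℝ) - 1)) =
      ((p : ℝ) - 2) / Real.sqrt ((p : ℝ) * ((p : ℝ) - 1)) := by
  have hp1 : (0 : ℝ) < p - 1 := by
    have : (2 : ℝ) ≤ p := by exact_mod_cast hp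
    linarith
  rw [hE, Real.sqrt_div' _ (by linarith), Real.sqrt_mul (by linarith)]
  have hs1 : 0 < Real.sqrt ((p : ℝ) - 1) := Real.sqrt_pos.2 hp1
  have hs : 0 < Real.sqrt (p : ℝ) := Real.sqrt_pos.2 (by linarith)
  have hsq := Real.sq_sqrt hp1.le
  field_simp
  linear_combination (p - 2 : ℝ) * hsq

theorem stmt_15_general (p : ℕ) (hp : 3 ≤ p)
    (Einf : ℝ) (hEinf : Einf = -2 * Real.sqrt (((p : ℝ) - 1) / p))
    (βsh : ℝ)
    (hβsh : βsh = Real.sqrt (((p : ℝ) - 1) ^ (p - 1) / ((p : ℝ) * ((p : ℝ) - 2) ^ (p - 2))))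
    (β : ℝ) (hβ : βsh ≤ β)
    (q : ℝ) (hq1 : Real.sqrt (((p : ℝ) - 2) / ((p : ℝ) - 1)) < q) :
    -β * q ^ p - Einf + (p : ℝ) * Einf / (2 * ((p : ℝ) - 1)) < 0 := by
  have hp3 : (3 : ℝ) ≤ p := by exact_mod_cast hp
  have hβsh_pos : 0 < βsh := by
    rw [hβsh]
    exact Real.sqrt_pos.2 <| div_pos (pow_pos (by linarith) _)
      (mul_pos (by linarith) (pow_pos (by linarith) _))
  have hthreshold : βsh * Real.sqrt (((p : ℝ) - 2) / ((p : ℝ) - 1)) ^ p < β * q ^ p :=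
    mul_lt_mul' hβ (pow_lt_pow_left₀ hq1 (Real.sqrt_nonneg _) (by omega)) (by positivity)
      (hβsh_pos.trans_le hβ)
  have hE := neg_add_mul_div_of_eq_neg_two_sqrt p (by omega) Einf hEinf
  rw [hβsh, sqrt_shattering_mul_threshold_pow_eq p (by omega)] at hthreshold
  linarith

/-- For `β ≥ β_sh` and `sqrt((p-2)/(p-1)) < q ≤ 1`:
`-β q^p - E∞ + p E∞/(2(p-1)) < 0`, where `E∞ = -2 sqrt((p-1)/p)` and
`β_sh = sqrt((p-1)^(p-1)/(p (p-2)^(p-2)))`. -/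
theorem stmt_15 (p : ℕ) (hp : 3 ≤ p)
    (Einf : ℝ) (hEinf : Einf = -2 * Real.sqrt (((p : ℝ) - 1) / p))
    (βsh : ℝ)
    (hβsh : βsh = Real.sqrt (((p : ℝ) - 1) ^ (p - 1) / ((p : ℝ) * ((p : ℝ) - 2) ^ (p - 2))))
    (β : ℝ) (hβ : βsh ≤ β)
    (q : ℝ) (hq1 : Real.sqrt (((p : ℝ) - 2) / ((p : ℝ) - 1)) < q) (hq2 : q ≤ 1) :
    -β * q ^ p - Einf + (p : ℝ) * Einf / (2 * ((p : ℝ) - 1)) < 0 :=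
  stmt_15_general p hp Einf hEinf βsh hβsh β hβ q hq1
end

section
/- Let p ≥ 3 be an integer, E_∞ = -2 sqrt((p-1)/p), β > 0, E < E_∞, and q ∈ (0,1). Suppose that (1-q^2) q^(p-2) = (-E - sqrt(E^2 - E_∞^2))/(2β(p-1)) and that -β q^p - ((p-2)/(2(p-1))) E + (p/(2(p-1))) sqrt(E^2 - E_∞^2) = 0. Then E = -β (q^p + p (1-q^2) q^(p-2)), and moreover -q^p E + β (1 - q^(2p) - p q^(2p-2)(1-q^2)) = β. -/
/-!
Both critical-point conditions are linear in `E` and in `S = √(E² - E_∞²)`; eliminating `S`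
between them gives `E = -β (q^p + p (1-q²) q^(p-2))`. Substituting this value of `E`, the terms in
`q^(2p)` and `q^(2p-2)` cancel and only `β` survives.
-/

theorem energy_eq_of_fixedPoint_of_stationary {P β E S x y : ℝ} (hP : P ≠ 1) (hβ : β ≠ 0)
    (hfp : y = (-E - S) / (2 * β * (P - 1)))
    (hcrit : -β * x - ((P - 2) / (2 * (P - 1))) * E + (P / (2 * (P - 1))) * S = 0) :
    E = -β * (x + P * y) := by
  have hP' : P - 1 ≠ 0 := sub_ne_zero.mpr hP
  rw [eq_div_iff (by positivity)] at hfp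
  field_simp at hcrit
  have hscaled : 2 * (P - 1) * (E + β * (x + P * y)) = 0 := by
    linear_combination (-1 : ℝ) * hcrit + P * hfp
  have hsum : E + β * (x + P * y) = 0 := (mul_eq_zero.mp hscaled).resolve_left (by positivity)
  linarith

theorem sub_pow_mul_add_eq_self_of_energy_eq {p : ℕ} (hp : 2 ≤ p) {β E q : ℝ}
    (hE : E = -β * (q ^ p + p * (1 - q ^ 2) * q ^ (p - 2))) :
    -q ^ p * E + β * (1 - q ^ (2 * p) - p * q ^ (2 * p - 2) * (1 - q ^ 2)) = β := by
  have h2p : q ^ (2 * p) = q ^ p * q ^ p := by rw [← pow_add, two_mul]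
  have h2p2 : q ^ (2 * p - 2) = q ^ p * q ^ (p - 2) := by rw [← pow_add]; congr 1; omega
  rw [h2p, h2p2]
  linear_combination (-q ^ p) * hE

theorem stmt_18_general (p : ℕ) (hp : 3 ≤ p) (β : ℝ) (hβ : 0 < β)
    (Einf : ℝ)
    (E : ℝ)
    (q : ℝ)
    (hfp : (1 - q ^ 2) * q ^ (p - 2) =
      (-E - Real.sqrt (E ^ 2 - Einf ^ 2)) / (2 * β * ((p : ℝ) - 1)))
    (hcrit : -β * q ^ p - (((p : ℝ) - 2) / (2 * ((p : ℝ) - 1))) * E +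
      ((p : ℝ) / (2 * ((p : ℝ) - 1))) * Real.sqrt (E ^ 2 - Einf ^ 2) = 0) :
    E = -β * (q ^ p + (p : ℝ) * (1 - q ^ 2) * q ^ (p - 2)) ∧
    -q ^ p * E + β * (1 - q ^ (2 * p) - (p : ℝ) * q ^ (2 * p - 2) * (1 - q ^ 2)) = β := by
  have hp1 : (p : ℝ) ≠ 1 := by exact_mod_cast (by omega : p ≠ 1)
  have hE : E = -β * (q ^ p + (p : ℝ) * (1 - q ^ 2) * q ^ (p - 2)) := by
    rw [energy_eq_of_fixedPoint_of_stationary hp1 hβ.ne' hfp hcrit, mul_assoc]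
  exact ⟨hE, sub_pow_mul_add_eq_self_of_energy_eq (by omega) hE⟩

/-- At a critical point of `V(E,q) = F_RS(E,q,β) + Θ(E)` (the fixed-point equation for `q` and
`∂_E V = 0`), one has `E = -β(q^p + p(1-q²)q^(p-2))` and
`-q^p E + β(1 - q^(2p) - p q^(2p-2)(1-q²)) = β`. -/
theorem stmt_18 (p : ℕ) (hp : 3 ≤ p) (β : ℝ) (hβ : 0 < β)
    (Einf : ℝ) (hEinf : Einf = -2 * Real.sqrt (((p : ℝ) - 1) / p))
    (E : ℝ) (hE : E < Einf)
    (q : ℝ) (hq : q ∈ Set.Ioo (0 : ℝ) 1)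
    (hfp : (1 - q ^ 2) * q ^ (p - 2) =
      (-E - Real.sqrt (E ^ 2 - Einf ^ 2)) / (2 * β * ((p : ℝ) - 1)))
    (hcrit : -β * q ^ p - (((p : ℝ) - 2) / (2 * ((p : ℝ) - 1))) * E +
      ((p : ℝ) / (2 * ((p : ℝ) - 1))) * Real.sqrt (E ^ 2 - Einf ^ 2) = 0) :
    E = -β * (q ^ p + (p : ℝ) * (1 - q ^ 2) * q ^ (p - 2)) ∧
    -q ^ p * E + β * (1 - q ^ (2 * p) - (p : ℝ) * q ^ (2 * p - 2) * (1 - q ^ 2)) = β :=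
  stmt_18_general p hp β hβ Einf E q hfp hcrit
end
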